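/- Let φ : ℝ → ℝ be twice continuously differentiable. For x ≠ y in ℝ², define H(x,y) := φ(s̃(x,y))/‖x−y‖ with s̃(x,y) = (‖y‖²−‖x‖²)/(2‖x−y‖). Then (∇ₓ+∇_y)²H(x,y) = φ''(s̃(x,y))/‖x−y‖, where (∇ₓ+∇_y)² := Σ_{i=1}^2 (∂_{x_i}+∂_{y_i})². -/

import Mathlib

/-!
Along a diagonal line `t ↦ (x + t v, y + t v)` the distance `‖x − y‖` is constant and `s̃` is
affine with slope `⟪y − x, v⟫ / ‖x − y‖`. Hence each diagonal derivative of `φ(s̃)·c`, with `c`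
constant along such lines, only differentiates `φ`, and two of them produce
`φ''(s̃) ⟪y − x, v⟫² / ‖x − y‖³`. Summing over an orthonormal basis of directions `v` turns
`∑ ⟪y − x, v⟫²` into `‖x − y‖²` by Parseval.
-/

open scoped InnerProductSpace

noncomputable section

variable {E : Type*} [NormedAddCommGroup E] [InnerProductSpace ℝ E]

def sTilde (q : E × E) : ℝ := (‖q.2‖ ^ 2 - ‖q.1‖ ^ 2) / (2 * ‖q.1 - q.2‖)

def sTildeSlope (q : E × E) (v : E) : ℝ := ⟪q.2 - q.1, v⟫_ℝ / ‖q.1 - q.2‖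

lemma fst_sub_snd_add_smul_diag (q : E × E) (v : E) (t : ℝ) :
    (q + t • (v, v)).1 - (q + t • (v, v)).2 = q.1 - q.2 := by
  simp only [Prod.fst_add, Prod.snd_add, Prod.smul_mk]
  abel

lemma sTildeSlope_add_smul_diag (q : E × E) (v : E) (t : ℝ) :
    sTildeSlope (q + t • (v, v)) v = sTildeSlope q v := by
  rw [sTildeSlope, sTildeSlope, fst_sub_snd_add_smul_diag, ← neg_sub (q + t • (v, v)).1,
    fst_sub_snd_add_smul_diag, neg_sub]

lemma sTilde_add_smul_diag (q : E × E) (v : E) (t : ℝ) :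
    sTilde (q + t • (v, v)) = sTilde q + t * sTildeSlope q v := by
  have norm_add_smul_sq (a : E) :
      ‖a + t • v‖ ^ 2 = ‖a‖ ^ 2 + 2 * (t * ⟪a, v⟫_ℝ) + t ^ 2 * ‖v‖ ^ 2 := by
    rw [norm_add_sq_real, real_inner_smul_right, norm_smul, mul_pow, Real.norm_eq_abs, sq_abs]
  rw [sTilde, fst_sub_snd_add_smul_diag, sTilde, sTildeSlope]
  simp only [Prod.fst_add, Prod.snd_add, Prod.smul_mk, norm_add_smul_sq, inner_sub_left]
  rcases eq_or_ne ‖q.1 - q.2‖ 0 with h | h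
  · simp [h]
  · field_simp
    ring

lemma differentiableAt_sTilde {q : E × E} (hq : q.1 ≠ q.2) : DifferentiableAt ℝ sTilde q := by
  have hnorm : DifferentiableAt ℝ (fun p : E × E => ‖p.1 - p.2‖) q :=
    (differentiable_fst.sub differentiable_snd).differentiableAt.norm ℝ (sub_ne_zero.mpr hq)
  have hnum : DifferentiableAt ℝ (fun p : E × E => ‖p.2‖ ^ 2 - ‖p.1‖ ^ 2) q :=
    (differentiable_snd.norm_sq ℝ).differentiableAt.sub
      (differentiable_fst.norm_sq ℝ).differentiableAt
  unfold sTilde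
  simp only [div_eq_mul_inv]
  exact hnum.mul ((hnorm.const_mul 2).inv
    (mul_ne_zero two_ne_zero (norm_ne_zero_iff.mpr (sub_ne_zero.mpr hq))))

lemma differentiableAt_inv_norm_fst_sub_snd {q : E × E} (hq : q.1 ≠ q.2) :
    DifferentiableAt ℝ (fun p : E × E => ‖p.1 - p.2‖⁻¹) q :=
  ((differentiable_fst.sub differentiable_snd).differentiableAt.norm ℝ
    (sub_ne_zero.mpr hq)).inv (norm_ne_zero_iff.mpr (sub_ne_zero.mpr hq))

lemma differentiableAt_sTildeSlope {q : E × E} (hq : q.1 ≠ q.2) (v : E) :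
    DifferentiableAt ℝ (fun p : E × E => sTildeSlope p v) q := by
  simp only [sTildeSlope, div_eq_mul_inv]
  exact ((differentiable_snd.sub differentiable_fst).inner ℝ
    (differentiable_const v)).differentiableAt.mul (differentiableAt_inv_norm_fst_sub_snd hq)

lemma hasLineDerivAt_comp_sTilde_mul {g : ℝ → ℝ} {c : E × E → ℝ} {q : E × E} {v : E}
    (hg : DifferentiableAt ℝ g (sTilde q)) (hc : ∀ t : ℝ, c (q + t • (v, v)) = c q) :
    HasLineDerivAt ℝ (fun p => g (sTilde p) * c p)
      (deriv g (sTilde q) * sTildeSlope q v * c q) q (v, v) := by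
  have hline : HasDerivAt (fun t : ℝ => sTilde q + t * sTildeSlope q v) (sTildeSlope q v) 0 := by
    simpa using ((hasDerivAt_id (0 : ℝ)).mul_const (sTildeSlope q v)).const_add (sTilde q)
  have hcomp := (hg.hasDerivAt.comp_of_eq 0 hline (by simp)).mul_const (c q)
  simpa only [HasLineDerivAt, sTilde_add_smul_diag, hc, Function.comp_def] using hcomp

lemma fderiv_comp_sTilde_mul_apply_diag {g : ℝ → ℝ} {c : E × E → ℝ} {q : E × E} {v : E}
    (hq : q.1 ≠ q.2) (hg : Differentiable ℝ g) (hcd : DifferentiableAt ℝ c q)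
    (hc : ∀ t : ℝ, c (q + t • (v, v)) = c q) :
    fderiv ℝ (fun p => g (sTilde p) * c p) q (v, v)
      = deriv g (sTilde q) * sTildeSlope q v * c q := by
  have hd : DifferentiableAt ℝ (fun p => g (sTilde p) * c p) q :=
    ((hg _).comp q (differentiableAt_sTilde hq)).mul hcd
  rw [← hd.lineDeriv_eq_fderiv, (hasLineDerivAt_comp_sTilde_mul (hg _) hc).lineDeriv]

lemma fderiv_comp_sTilde_div_apply_diag {φ : ℝ → ℝ} (hφ : Differentiable ℝ φ)
    {q : E × E} (hq : q.1 ≠ q.2) (v : E) :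
    fderiv ℝ (fun p : E × E => φ (sTilde p) / ‖p.1 - p.2‖) q (v, v)
      = deriv φ (sTilde q) * (sTildeSlope q v * ‖q.1 - q.2‖⁻¹) := by
  simp only [div_eq_mul_inv]
  rw [fderiv_comp_sTilde_mul_apply_diag hq hφ (differentiableAt_inv_norm_fst_sub_snd hq)
    fun t => by rw [fst_sub_snd_add_smul_diag], mul_assoc]

theorem fderiv_fderiv_comp_sTilde_div_apply_diag {φ : ℝ → ℝ} (hφ : Differentiable ℝ φ)
    (hφ' : Differentiable ℝ (deriv φ)) {q : E × E} (hq : q.1 ≠ q.2) (v : E) :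
    fderiv ℝ (fun p => fderiv ℝ (fun p' : E × E => φ (sTilde p') / ‖p'.1 - p'.2‖) p (v, v))
        q (v, v)
      = deriv (deriv φ) (sTilde q) * sTildeSlope q v ^ 2 / ‖q.1 - q.2‖ := by
  have hfirst : (fun p => fderiv ℝ (fun p' : E × E => φ (sTilde p') / ‖p'.1 - p'.2‖) p (v, v))
      =ᶠ[nhds q] fun p => deriv φ (sTilde p) * (sTildeSlope p v * ‖p.1 - p.2‖⁻¹) := by
    filter_upwards [(isOpen_ne_fun continuous_fst continuous_snd).mem_nhds hq] with p hp
    exact fderiv_comp_sTilde_div_apply_diag hφ hp v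
  rw [hfirst.fderiv_eq, fderiv_comp_sTilde_mul_apply_diag
    (c := fun p => sTildeSlope p v * ‖p.1 - p.2‖⁻¹) hq hφ'
    ((differentiableAt_sTildeSlope hq v).mul (differentiableAt_inv_norm_fst_sub_snd hq))
    fun t => by rw [sTildeSlope_add_smul_diag, fst_sub_snd_add_smul_diag]]
  ring

lemma sum_sTildeSlope_sq {ι : Type*} [Fintype ι] (b : OrthonormalBasis ι ℝ E) {q : E × E}
    (hq : q.1 ≠ q.2) : ∑ i, sTildeSlope q (b i) ^ 2 = 1 := by
  have hne : ‖q.2 - q.1‖ ≠ 0 := norm_ne_zero_iff.mpr (sub_ne_zero.mpr hq.symm)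
  simp only [sTildeSlope, div_pow, ← Finset.sum_div, b.sum_sq_inner_left, norm_sub_rev q.1]
  exact div_self (pow_ne_zero 2 hne)

theorem sum_fderiv_fderiv_comp_sTilde_div_apply_diag {ι : Type*} [Fintype ι]
    (b : OrthonormalBasis ι ℝ E) {φ : ℝ → ℝ} (hφ : Differentiable ℝ φ)
    (hφ' : Differentiable ℝ (deriv φ)) {q : E × E} (hq : q.1 ≠ q.2) :
    ∑ i, fderiv ℝ (fun p => fderiv ℝ (fun p' : E × E => φ (sTilde p') / ‖p'.1 - p'.2‖) p
        (b i, b i)) q (b i, b i)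
      = deriv (deriv φ) (sTilde q) / ‖q.1 - q.2‖ := by
  simp only [fderiv_fderiv_comp_sTilde_div_apply_diag hφ hφ' hq, ← Finset.sum_div,
    ← Finset.mul_sum, sum_sTildeSlope_sq b hq, mul_one]

end

/-- Let `φ : ℝ → ℝ` be `C²` and, for `x ≠ y` in `ℝ²`, set
`H(x,y) = φ(s̃(x,y))/‖x−y‖` with `s̃(x,y) = (‖y‖²−‖x‖²)/(2‖x−y‖)`. Then
`(∇ₓ+∇_y)²H(x,y) = φ''(s̃(x,y))/‖x−y‖`, where
`(∇ₓ+∇_y)² = Σᵢ (∂_{xᵢ}+∂_{yᵢ})²` (second derivatives in the diagonal directions `(eᵢ,eᵢ)`). -/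
theorem stmt9 (φ : ℝ → ℝ) (hφ : ContDiff ℝ 2 φ)
    (x y : EuclideanSpace ℝ (Fin 2)) (hxy : x ≠ y) :
    (∑ i : Fin 2,
      fderiv ℝ (fun p : EuclideanSpace ℝ (Fin 2) × EuclideanSpace ℝ (Fin 2) =>
          fderiv ℝ (fun q : EuclideanSpace ℝ (Fin 2) × EuclideanSpace ℝ (Fin 2) =>
              φ ((‖q.2‖ ^ 2 - ‖q.1‖ ^ 2) / (2 * ‖q.1 - q.2‖)) / ‖q.1 - q.2‖) p
            (EuclideanSpace.single i 1, EuclideanSpace.single i 1)) (x, y)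
        (EuclideanSpace.single i 1, EuclideanSpace.single i 1))
      = deriv (deriv φ) ((‖y‖ ^ 2 - ‖x‖ ^ 2) / (2 * ‖x - y‖)) / ‖x - y‖ := by
  have hφ' : Differentiable ℝ (deriv φ) := by
    simpa only [iteratedDeriv_one] using hφ.differentiable_iteratedDeriv' 1
  have key := sum_fderiv_fderiv_comp_sTilde_div_apply_diag (EuclideanSpace.basisFun (Fin 2) ℝ)
    (hφ.differentiable two_ne_zero) hφ' (q := (x, y)) hxy
  simp only [EuclideanSpace.basisFun_apply] at key
  exact key
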